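/- Let g be a monic divisor of x^{2n} − 1 in K[x] of degree k with 0 ≤ k ≤ 2n − 1, let D ⊆ K^{2n} be the cyclic code corresponding to the ideal ⟨g⟩ of K[x]/⟨x^{2n} − 1⟩, let h(x) = (x^{2n} − 1)/g(x) and h*(x) = x^{2n−k} h(1/x) its reciprocal polynomial with coefficient vector V_{h*} ∈ K^{2n}, and let C = Ψ^{-1}(D) ⊆ F^n be the corresponding additive conjucyclic code. Then the alternating dual C^{⊥_a} equals the K-linear span of the k vectors Ψ^{-1}(τ(σ^i(V_{h*}))) for 0 ≤ i ≤ k − 1. -/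

import Mathlib

open Polynomial

/-- The map `Ψ : F^n → K^{2n}`,
`Ψ(α₀,…,α_{n−1}) = (Tr(βα₀),…,Tr(βα_{n−1}), Tr(β̄α₀),…,Tr(β̄α_{n−1}))`, where `β̄ = β^q`. -/
def Psi (q n : ℕ) {K F : Type*} [Field K] [Field F] (Tr : F → K) (β : F)
    (α : Fin n → F) : Fin (2 * n) → K :=
  fun i =>
    if h : (i : ℕ) < n then Tr (β * α ⟨(i : ℕ), h⟩)
    else Tr (β ^ q * α ⟨(i : ℕ) - n, by have := i.isLt; omega⟩)

/-- The (right) cyclic shift `σ : K^m → K^m`, `σ(v₀,…,v_{m−1}) = (v_{m−1}, v₀,…,v_{m−2})`. -/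
def cycShift (m : ℕ) {K : Type*} (v : Fin m → K) : Fin m → K :=
  fun i =>
    if _h : (i : ℕ) = 0 then v ⟨m - 1, by have := i.isLt; omega⟩
    else v ⟨(i : ℕ) - 1, by have := i.isLt; omega⟩

/-- The map `τ : K^{2n} → K^{2n}`, `τ(v₀,…,v_{2n−1}) = (−v_n,…,−v_{2n−1}, v₀,…,v_{n−1})`. -/
def tau (n : ℕ) {K : Type*} [Field K] (v : Fin (2 * n) → K) : Fin (2 * n) → K :=
  fun i =>
    if h : (i : ℕ) < n then - v ⟨n + (i : ℕ), by omega⟩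
    else v ⟨(i : ℕ) - n, by have := i.isLt; omega⟩

/-- The alternating inner product on `F^n`:
`⟨u,v⟩_a = (β̄² − β²) Σ_{i=0}^{n−1} (u_i v̄_i − ū_i v_i)`, where `x̄ = x^q`. -/
def altInner (q n : ℕ) {F : Type*} [Field F] (β : F) (u v : Fin n → F) : F :=
  ((β ^ q) ^ 2 - β ^ 2) * ∑ i : Fin n, (u i * (v i) ^ q - (u i) ^ q * v i)

/-- The coefficient vector in `K^m` of a polynomial `g ∈ K[x]`. -/
def coeffVec (m : ℕ) {K : Type*} [Field K] (g : K[X]) : Fin m → K :=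
  fun i => g.coeff (i : ℕ)

/-- The cyclic code of length `m` corresponding to the ideal `⟨g⟩` of `K[x]/⟨x^m − 1⟩`. -/
def cyclicCodeOf (m : ℕ) {K : Type*} [Field K] (g : K[X]) : Set (Fin m → K) :=
  {v | Ideal.Quotient.mk (Ideal.span {(X : K[X]) ^ m - 1})
        (∑ i : Fin m, Polynomial.C (v i) * X ^ (i : ℕ)) ∈
      Ideal.span {Ideal.Quotient.mk (Ideal.span {(X : K[X]) ^ m - 1}) g}}

/-!
Expanding the trace, `Tr(β̄u)Tr(βv) - Tr(βu)Tr(β̄v) = (β̄² - β²)(u v̄ - ū v)`, so the alternating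
form is the dot product twisted by `τ`: `⟨u, v⟩_a = Ψ(u) · τ(Ψ(v))`. For a primitive `β` we have
`β̄² ≠ β²`, which makes `Ψ` a `K`-linear isomorphism; hence `C^{⊥_a} = Ψ⁻¹(τ⁻¹(D^⊥))`, and
`τ⁻¹ = -τ` turns this into `Ψ⁻¹(τ(D^⊥))`. It remains to see that the Euclidean dual `D^⊥` is
spanned by the `k` shifts `x^j h*`: they are orthogonal to `D` because `g h = x^{2n} - 1`, they
are independent because `deg h* ≤ 2n - k`, and `D^⊥` has dimension `k` because `D` contains the
`2n - k` independent shifts `x^i g`.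
-/

namespace ConjucyclicCode

open Matrix

section CyclicCode

variable {K : Type*} [Field K] {m : ℕ}

lemma sum_C_mul_X_pow_eq_ofFn [DecidableEq K] (v : Fin m → K) :
    ∑ i : Fin m, C (v i) * X ^ (i : ℕ) = ofFn m v := by
  simp only [ofFn_eq_sum_monomial, C_mul_X_pow_eq_monomial]

lemma coeffVec_eq_toFn (p : K[X]) : coeffVec m p = toFn m p := rfl

lemma mem_cyclicCodeOf_iff [DecidableEq K] {g : K[X]} (hdvd : g ∣ X ^ m - 1)
    (v : Fin m → K) : v ∈ cyclicCodeOf m g ↔ g ∣ ofFn m v := by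
  rw [cyclicCodeOf, Set.mem_ofPred_eq, sum_C_mul_X_pow_eq_ofFn, Ideal.mem_span_singleton]
  refine ⟨fun ⟨z, hz⟩ => ?_, map_dvd _⟩
  obtain ⟨r, rfl⟩ := Ideal.Quotient.mk_surjective z
  rw [← map_mul, Ideal.Quotient.eq, Ideal.mem_span_singleton] at hz
  simpa using dvd_add (hdvd.trans hz) (dvd_mul_right g r)

lemma cycShift_iterate_coeffVec {p : K[X]} {j : ℕ} (hj : p.natDegree + j < m) :
    (cycShift m)^[j] (coeffVec m p) = coeffVec m (X ^ j * p) := by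
  induction j with
  | zero => simp
  | succ j ih =>
    rw [Function.iterate_succ_apply', ih (by omega)]
    ext ⟨i, hi⟩
    rcases i with _ | i
    · have : (X ^ j * p).natDegree < m - 1 :=
        natDegree_mul_le.trans_lt (by rw [natDegree_X_pow]; omega)
      simp [cycShift, coeffVec, coeff_eq_zero_of_natDegree_lt this, pow_succ, mul_assoc]
    · simp [cycShift, coeffVec, pow_succ', mul_assoc]

lemma X_pow_sub_one_ne_zero (hm : 0 < m) : (X ^ m - 1 : K[X]) ≠ 0 := by
  simpa using X_pow_sub_C_ne_zero hm (1 : K)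

lemma natDegree_add_natDegree_eq {g h : K[X]} (hm : 0 < m) (hgh : g * h = X ^ m - 1) :
    g.natDegree + h.natDegree = m := by
  have hne : g * h ≠ 0 := hgh ▸ X_pow_sub_one_ne_zero hm
  rw [← natDegree_mul (left_ne_zero_of_mul hne) (right_ne_zero_of_mul hne), hgh]
  simpa using natDegree_X_pow_sub_C (n := m) (r := (1 : K))

lemma coeffVec_dotProduct_coeffVec (hm : 0 < m) (P Q : K[X]) :
    coeffVec m P ⬝ᵥ coeffVec m Q = (P * reflect (m - 1) Q).coeff (m - 1) := by
  obtain ⟨N, rfl⟩ : ∃ N, m = N + 1 := ⟨m - 1, by omega⟩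
  rw [Nat.add_sub_cancel, coeff_mul, Finset.Nat.sum_antidiagonal_eq_sum_range_succ_mk,
    dotProduct, ← Fin.sum_univ_eq_sum_range]
  refine Finset.sum_congr rfl fun ⟨i, hi⟩ _ => ?_
  rw [coeffVec, coeffVec, coeff_reflect, revAt_le (by omega), Nat.sub_sub_self (by omega)]

lemma reflect_X_pow_mul_reverse {h : K[X]} {a b j : ℕ} (hj : j ≤ a) (hh : h.natDegree = b) :
    reflect (a + b) (X ^ j * h.reverse) = X ^ (a - j) * h := by
  rw [reflect_mul _ _ (by rw [natDegree_X_pow]; exact hj) (hh ▸ h.reverse_natDegree_le),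
    reflect_monomial, revAt_le hj, reverse, hh, reflect_reflect]

lemma coeffVec_mul_dotProduct_X_pow_mul_reverse {g h c : K[X]} (hm : 0 < m)
    (hgh : g * h = X ^ m - 1) (hc : (g * c).natDegree < m) {j : ℕ} (hj : j < g.natDegree) :
    coeffVec m (g * c) ⬝ᵥ coeffVec m (X ^ j * h.reverse) = 0 := by
  rcases eq_or_ne c 0 with rfl | hc0
  · simp [coeffVec, dotProduct]
  have hdeg := natDegree_add_natDegree_eq hm hgh
  have hg0 : g ≠ 0 := by rintro rfl; simp at hj
  rw [natDegree_mul hg0 hc0] at hc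
  have hm1 : m - 1 = (g.natDegree - 1) + h.natDegree := by omega
  -- `g c · x^(k-1-j) h = (x^m - 1) c x^(k-1-j)` vanishes in degree `m - 1` since `deg c < m - k`.
  rw [coeffVec_dotProduct_coeffVec hm, hm1, reflect_X_pow_mul_reverse (by omega) rfl,
    show g * c * (X ^ (g.natDegree - 1 - j) * h) = (X ^ m * c - c) * X ^ (g.natDegree - 1 - j) by
      linear_combination (c * X ^ (g.natDegree - 1 - j)) * hgh,
    coeff_mul_X_pow', if_pos (by omega), coeff_sub, coeff_X_pow_mul', if_neg (by omega),
    coeff_eq_zero_of_natDegree_lt (by omega), sub_zero]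

lemma mem_cyclicCodeOf_iff_exists {g : K[X]} (hm : 0 < m) (hdvd : g ∣ X ^ m - 1)
    (v : Fin m → K) :
    v ∈ cyclicCodeOf m g ↔ ∃ c, (g * c).natDegree < m ∧ coeffVec m (g * c) = v := by
  classical
  rw [mem_cyclicCodeOf_iff hdvd]
  constructor
  · rintro ⟨c, hc⟩
    exact ⟨c, hc ▸ ofFn_natDegree_lt hm v, hc ▸ toFn_comp_ofFn_eq_id m v⟩
  · rintro ⟨c, hc, rfl⟩
    rw [coeffVec_eq_toFn, ofFn_comp_toFn_eq_id_of_natDegree_lt hc]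
    exact dvd_mul_right g c

lemma linearIndependent_coeffVec_X_pow_mul {p : K[X]} (hp : p ≠ 0) {e : ℕ}
    (he : e + p.natDegree ≤ m) :
    LinearIndependent K (fun j : Fin e => coeffVec m (X ^ (j : ℕ) * p)) := by
  classical
  rw [Fintype.linearIndependent_iff]
  intro c hc
  have hsum : ∑ j, c j • coeffVec m (X ^ (j : ℕ) * p) = toFn m (ofFn e c * p) := by
    simp only [ofFn_eq_sum_monomial, Finset.sum_mul, map_sum, ← C_mul_X_pow_eq_monomial,
      ← smul_eq_C_mul, smul_mul_assoc, map_smul, coeffVec_eq_toFn]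
  have hc0 : ofFn e c = 0 := by
    by_contra h0
    have he0 : 1 ≤ e := Nat.one_le_iff_ne_zero.mpr (ne_zero_of_ofFn_ne_zero h0)
    have hlt : (ofFn e c * p).natDegree < m := by
      rw [natDegree_mul h0 hp]; have := ofFn_natDegree_lt he0 c; omega
    have := ofFn_comp_toFn_eq_id_of_natDegree_lt hlt
    rw [← hsum, hc, map_zero] at this
    exact mul_ne_zero h0 hp this.symm
  exact congrFun (injective_ofFn e (hc0.trans (ofFn_zero e).symm))

lemma dotProductBilin_nondegenerate :
    (dotProductBilin K K : LinearMap.BilinForm K (Fin m → K)).Nondegenerate :=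
  ⟨fun u hu => dotProduct_eq_zero u hu,
    fun v hv => dotProduct_eq_zero v fun u => dotProduct_comm v u ▸ hv u⟩

theorem dual_cyclicCodeOf {g h : K[X]} (hm : 0 < m) (hgh : g * h = X ^ m - 1) :
    {w : Fin m → K | ∀ a ∈ cyclicCodeOf m g, a ⬝ᵥ w = 0} =
      Submodule.span K
        (Set.range fun j : Fin g.natDegree => (cycShift m)^[j] (coeffVec m h.reverse)) := by
  set k := g.natDegree
  set B : LinearMap.BilinForm K (Fin m → K) := dotProductBilin K K
  have hdeg : k + h.natDegree = m := natDegree_add_natDegree_eq hm hgh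
  have hne : g * h ≠ 0 := hgh ▸ X_pow_sub_one_ne_zero hm
  have hg0 := left_ne_zero_of_mul hne
  have hrev0 : h.reverse ≠ 0 := reverse_eq_zero.not.mpr (right_ne_zero_of_mul hne)
  have hrevdeg : h.reverse.natDegree ≤ h.natDegree := h.reverse_natDegree_le
  have hcode := mem_cyclicCodeOf_iff_exists hm ⟨h, hgh.symm⟩
  have hshift (j : Fin k) :
      (cycShift m)^[j] (coeffVec m h.reverse) = coeffVec m (X ^ (j : ℕ) * h.reverse) :=
    cycShift_iterate_coeffVec (by have := j.isLt; omega)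
  simp only [hshift]
  set S := Submodule.span K (Set.range fun j : Fin k => coeffVec m (X ^ (j : ℕ) * h.reverse))
  set D' := Submodule.span K (Set.range fun i : Fin (m - k) => coeffVec m (X ^ (i : ℕ) * g))
  have hS : ∀ w ∈ S, ∀ a ∈ cyclicCodeOf m g, a ⬝ᵥ w = 0 := by
    intro w hw a ha
    obtain ⟨c, hc, rfl⟩ := (hcode a).mp ha
    refine (Submodule.span_le (p := LinearMap.ker (B (coeffVec m (g * c)))) |>.mpr ?_) hw
    rintro _ ⟨j, rfl⟩
    exact coeffVec_mul_dotProduct_X_pow_mul_reverse hm hgh hc j.isLt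
  have hD' : ∀ w, (∀ a ∈ cyclicCodeOf m g, a ⬝ᵥ w = 0) → w ∈ B.orthogonal D' := by
    intro w hw
    refine LinearMap.BilinForm.mem_orthogonal_iff.mpr fun a ha => ?_
    refine (Submodule.span_le (p := LinearMap.ker (B.flip w)) |>.mpr ?_) ha
    rintro _ ⟨i, rfl⟩
    refine hw _ ((hcode _).mpr ⟨X ^ (i : ℕ), ?_, by rw [mul_comm]⟩)
    rw [natDegree_mul hg0 (pow_ne_zero _ X_ne_zero), natDegree_X_pow]; omega
  have hSD' : S = B.orthogonal D' := by
    refine Submodule.eq_of_le_of_finrank_le (fun w hw => hD' w (hS w hw)) ?_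
    rw [LinearMap.BilinForm.finrank_orthogonal dotProductBilin_nondegenerate,
      finrank_span_eq_card (linearIndependent_coeffVec_X_pow_mul hg0 (by omega)),
      finrank_span_eq_card (linearIndependent_coeffVec_X_pow_mul hrev0 (by omega))]
    simp only [Fintype.card_fin, Module.finrank_fin_fun]
    omega
  ext w
  exact ⟨fun hw => hSD' ▸ hD' w hw, fun hw => hS w hw⟩

end CyclicCode

lemma sum_fin_two_mul {M : Type*} [AddCommMonoid M] (n : ℕ) (f : Fin (2 * n) → M) :
    ∑ i, f i = ∑ i : Fin n, (f ⟨i, by omega⟩ + f ⟨n + i, by omega⟩) := by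
  rw [← Fin.sum_congr' f (two_mul n).symm, Fin.sum_univ_add, ← Finset.sum_add_distrib]
  rfl

section Tau

variable {K : Type*} [Field K] (n : ℕ)

@[simp]
lemma tau_apply_left (v : Fin (2 * n) → K) (i : Fin n) :
    tau n v ⟨i, by omega⟩ = -v ⟨n + i, by omega⟩ := by
  simp [tau]

@[simp]
lemma tau_apply_right (v : Fin (2 * n) → K) (i : Fin n) :
    tau n v ⟨n + i, by omega⟩ = v ⟨i, by omega⟩ := by
  simp [tau]

lemma tau_tau (v : Fin (2 * n) → K) : tau n (tau n v) = -v := by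
  ext ⟨i, hi⟩
  simp only [tau, Pi.neg_apply]
  split_ifs <;> first | omega | (congr 3; omega)

def tauLinearMap : (Fin (2 * n) → K) →ₗ[K] (Fin (2 * n) → K) where
  toFun := tau n
  map_add' u v := by
    ext i; simp only [tau, Pi.add_apply]; split_ifs <;> ring
  map_smul' c u := by
    ext i; simp only [tau, Pi.smul_apply, smul_eq_mul, RingHom.id_apply]; split_ifs <;> ring

@[simp]
lemma tauLinearMap_apply (v : Fin (2 * n) → K) : tauLinearMap n v = tau n v := rfl

lemma mem_span_range_invFun_tau {V : Type*} [AddCommGroup V] [Module K V]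
    (e : V ≃ₗ[K] (Fin (2 * n) → K)) {ι : Type*} (w : ι → Fin (2 * n) → K) (v : V) :
    v ∈ Submodule.span K (Set.range fun i => Function.invFun e (tau n (w i))) ↔
      tau n (e v) ∈ Submodule.span K (Set.range w) := by
  have hinv : Function.invFun e = e.symm :=
    funext fun x => e.injective (by rw [e.apply_symm_apply, Function.invFun_eq (e.surjective x)])
  have hrange : (Set.range fun i => Function.invFun e (tau n (w i))) =
      (e.symm.toLinearMap ∘ₗ tauLinearMap n) '' Set.range w := by
    rw [hinv, ← Set.range_comp]; rfl
  rw [hrange, ← Submodule.map_span, Submodule.mem_map]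
  constructor
  · rintro ⟨s, hs, rfl⟩
    simpa [tau_tau] using neg_mem hs
  · intro hv
    refine ⟨-tau n (e v), neg_mem hv, ?_⟩
    rw [LinearMap.comp_apply, map_neg, tauLinearMap_apply, tau_tau, neg_neg]
    exact e.symm_apply_apply v

end Tau

section Psi

variable {K F : Type*} [Field K] [Field F] (q n : ℕ) (Tr : F → K) (β : F)

@[simp]
lemma Psi_apply_left (u : Fin n → F) (i : Fin n) :
    Psi q n Tr β u ⟨i, by omega⟩ = Tr (β * u i) := by
  simp [Psi]

@[simp]
lemma Psi_apply_right (u : Fin n → F) (i : Fin n) :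
    Psi q n Tr β u ⟨n + i, by omega⟩ = Tr (β ^ q * u i) := by
  simp [Psi]

theorem algebraMap_Psi_dotProduct_tau_Psi [Algebra K F]
    (hTr : ∀ x, algebraMap K F (Tr x) = x + x ^ q) (hβ : (β ^ q) ^ q = β) (u v : Fin n → F) :
    algebraMap K F (Psi q n Tr β u ⬝ᵥ tau n (Psi q n Tr β v)) = altInner q n β u v := by
  rw [dotProduct, sum_fin_two_mul, map_sum, altInner, Finset.mul_sum]
  refine Finset.sum_congr rfl fun i _ => ?_
  simp only [Psi_apply_left, Psi_apply_right, tau_apply_left, tau_apply_right, map_add, map_mul,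
    map_neg, hTr, mul_pow, hβ]
  ring

lemma forall_altInner_eq_zero_iff [Algebra K F]
    (hTr : ∀ x, algebraMap K F (Tr x) = x + x ^ q) (hβ : (β ^ q) ^ q = β)
    (hsurj : Function.Surjective (Psi q n Tr β)) (D : Set (Fin (2 * n) → K)) (v : Fin n → F) :
    (∀ u ∈ Psi q n Tr β ⁻¹' D, altInner q n β u v = 0) ↔
      ∀ a ∈ D, a ⬝ᵥ tau n (Psi q n Tr β v) = 0 := by
  simp only [hsurj.forall, Set.mem_preimage, ← algebraMap_Psi_dotProduct_tau_Psi q n Tr β hTr hβ,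
    map_eq_zero]

def psiLinearMap [Algebra K F] (hTr : IsLinearMap K Tr) :
    (Fin n → F) →ₗ[K] (Fin (2 * n) → K) where
  toFun := Psi q n Tr β
  map_add' u v := by
    ext i; simp only [Psi, Pi.add_apply, mul_add]; split_ifs <;> exact hTr.map_add _ _
  map_smul' c u := by
    ext i; simp only [Psi, Pi.smul_apply, mul_smul_comm]; split_ifs <;> exact hTr.map_smul _ _

@[simp]
lemma coe_psiLinearMap [Algebra K F] (hTr : IsLinearMap K Tr) :
    ⇑(psiLinearMap q n Tr β hTr) = Psi q n Tr β := rfl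

end Psi

section FiniteField

variable {K F : Type*} [Field K] [Fintype K] [Field F] [Algebra K F]

lemma isLinearMap_of_algebraMap_eq {Tr : F → K}
    (hTr : ∀ x, algebraMap K F (Tr x) = x + x ^ Fintype.card K) : IsLinearMap K Tr := by
  have hφ (x : F) : algebraMap K F (Tr x) = x + FiniteField.frobeniusAlgHom K F x := hTr x
  constructor
  · intro x y
    apply (algebraMap K F).injective
    rw [map_add, hφ, hφ, hφ, map_add]
    ring
  · intro c x
    apply (algebraMap K F).injective
    rw [smul_eq_mul, map_mul, hφ, hφ, map_smul, Algebra.smul_def, Algebra.smul_def]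
    ring

lemma pow_pow_eq_self_of_card_eq_sq [Fintype F] {q : ℕ} (hF : Fintype.card F = q ^ 2) (x : F) :
    (x ^ q) ^ q = x := by
  rw [← pow_mul, ← sq, ← hF, FiniteField.pow_card]

lemma finrank_eq_two_of_card_eq_sq [Fintype F] (hF : Fintype.card F = Fintype.card K ^ 2) :
    Module.finrank K F = 2 :=
  Nat.pow_right_injective Fintype.one_lt_card (Module.card_eq_pow_finrank.symm.trans hF)

lemma card_sub_one_le_of_forall_pow_eq_one [Fintype F] {d : ℕ}
    (hd : 0 < d) (h : ∀ x : F, x ≠ 0 → x ^ d = 1) : Fintype.card F - 1 ≤ d := by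
  classical
  calc Fintype.card F - 1 = (Finset.univ.erase (0 : F)).card := by
        rw [Finset.card_erase_of_mem (Finset.mem_univ _), Finset.card_univ]
    _ ≤ (nthRootsFinset d (1 : F)).card := Finset.card_le_card fun x hx =>
        (mem_nthRootsFinset hd 1).mpr (h x (Finset.ne_of_mem_erase hx))
    _ ≤ d := by
        rw [nthRootsFinset_def]; exact (Multiset.toFinset_card_le _).trans (card_nthRoots d 1)

lemma frobenius_sq_ne_sq [Fintype F] {q : ℕ} (hq : 2 ≤ q)
    (hF : Fintype.card F = q ^ 2) {β : F} (hβ : ∀ x : F, x ≠ 0 → ∃ j : ℕ, x = β ^ j) :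
    (β ^ q) ^ 2 ≠ β ^ 2 := by
  intro heq
  have hroot (x : F) (hx : x ≠ 0) : x ^ (2 * q - 2) = 1 := by
    obtain ⟨j, rfl⟩ := hβ x hx
    refine mul_right_cancel₀ (pow_ne_zero 2 hx) ?_
    calc (β ^ j) ^ (2 * q - 2) * (β ^ j) ^ 2 = ((β ^ q) ^ 2) ^ j := by
          rw [← pow_add, Nat.sub_add_cancel (by omega)]; ring
      _ = 1 * (β ^ j) ^ 2 := by rw [heq]; ring
  have hcard := card_sub_one_le_of_forall_pow_eq_one (by omega) hroot
  have : 2 * q ≤ q ^ 2 := by rw [sq]; exact Nat.mul_le_mul_right q hq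
  omega

end FiniteField

section PsiBijective

variable {K F : Type*} [Field K] [Field F] [Algebra K F]

lemma eq_zero_of_trace_mul_eq_zero {q : ℕ} (hq : q ≠ 0) {Tr : F → K}
    (hTr : ∀ x, algebraMap K F (Tr x) = x + x ^ q) {β : F} (hβq : (β ^ q) ^ q = β)
    (hβ : (β ^ q) ^ 2 ≠ β ^ 2) {a : F} (h₁ : Tr (β * a) = 0) (h₂ : Tr (β ^ q * a) = 0) :
    a = 0 := by
  have e₁ : β * a + β ^ q * a ^ q = 0 := by
    simpa [hTr, mul_pow] using congrArg (algebraMap K F) h₁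
  have e₂ : β ^ q * a + β * a ^ q = 0 := by
    simpa [hTr, mul_pow, hβq] using congrArg (algebraMap K F) h₂
  have e₃ : ((β ^ q) ^ 2 - β ^ 2) * a ^ q = 0 := by linear_combination β ^ q * e₁ - β * e₂
  exact (pow_eq_zero_iff hq).mp ((mul_eq_zero.mp e₃).resolve_left (sub_ne_zero.mpr hβ))

lemma bijective_psiLinearMap [Fintype K] [Fintype F] (n : ℕ)
    (hF : Fintype.card F = Fintype.card K ^ 2) {Tr : F → K}
    (hTr : ∀ x, algebraMap K F (Tr x) = x + x ^ Fintype.card K) {β : F}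
    (hβ : (β ^ Fintype.card K) ^ 2 ≠ β ^ 2) :
    Function.Bijective
      (psiLinearMap (Fintype.card K) n Tr β (isLinearMap_of_algebraMap_eq hTr)) := by
  have hinj : Function.Injective
      (psiLinearMap (Fintype.card K) n Tr β (isLinearMap_of_algebraMap_eq hTr)) := by
    rw [injective_iff_map_eq_zero]
    intro u hu
    ext i
    exact eq_zero_of_trace_mul_eq_zero Fintype.card_ne_zero hTr
      (pow_pow_eq_self_of_card_eq_sq hF β) hβ
      (by simpa using congrFun hu ⟨i, by omega⟩) (by simpa using congrFun hu ⟨n + i, by omega⟩)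
  refine ⟨hinj, (LinearMap.injective_iff_surjective_of_finrank_eq_finrank ?_).mp hinj⟩
  rw [Module.finrank_pi_fintype]
  simp [finrank_eq_two_of_card_eq_sq hF, mul_comm]

end PsiBijective

end ConjucyclicCode

open ConjucyclicCode in
theorem stmt15_general (q n k : ℕ) (hn : 0 < n) {K F : Type*} [Field K] [Fintype K] [Field F]
    [Fintype F] [Algebra K F]
    (hK : Fintype.card K = q) (hF : Fintype.card F = q ^ 2)
    (β : F) (hβ : ∀ x : F, x ≠ 0 → ∃ j : ℕ, x = β ^ j)
    (Tr : F → K) (hTr : ∀ x : F, algebraMap K F (Tr x) = x + x ^ q)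
    (g : K[X]) (hdvd : g ∣ X ^ (2 * n) - 1)
    (hdeg : g.natDegree = k) :
    {v : Fin n → F | ∀ u ∈ Psi q n Tr β ⁻¹' cyclicCodeOf (2 * n) g,
        altInner q n β u v = 0} =
      (Submodule.span K (Set.range fun i : Fin k =>
          Function.invFun (Psi q n Tr β)
            (tau n ((cycShift (2 * n))^[(i : ℕ)]
              (coeffVec (2 * n) (((X : K[X]) ^ (2 * n) - 1) / g).reverse)))) :
        Set (Fin n → F)) := by
  subst hK hdeg
  let Ψ := LinearEquiv.ofBijective _ (bijective_psiLinearMap n hF hTr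
    (frobenius_sq_ne_sq Fintype.one_lt_card hF hβ))
  have hΨ : ⇑Ψ = Psi _ n Tr β := rfl
  have hg0 : g ≠ 0 := ne_zero_of_dvd_ne_zero (X_pow_sub_one_ne_zero (by omega)) hdvd
  have hgh : g * ((X ^ (2 * n) - 1) / g) = X ^ (2 * n) - 1 :=
    EuclideanDomain.mul_div_cancel' hg0 hdvd
  ext v
  rw [Set.mem_ofPred_eq, forall_altInner_eq_zero_iff _ n Tr β hTr
      (pow_pow_eq_self_of_card_eq_sq hF β) Ψ.surjective,
    SetLike.mem_coe, ← hΨ, mem_span_range_invFun_tau n Ψ, ← SetLike.mem_coe,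
    ← dual_cyclicCodeOf (by omega) hgh]
  rfl

/-- Let `g` be a monic divisor of `x^{2n} − 1` in `K[x]` of degree `k` with
`0 ≤ k ≤ 2n − 1`, `D ⊆ K^{2n}` the cyclic code corresponding to `⟨g⟩`,
`h = (x^{2n} − 1)/g` with reciprocal polynomial `h* = x^{2n−k}h(1/x)` (`h.reverse`) and
coefficient vector `V_{h*} ∈ K^{2n}`, and let `C = Ψ⁻¹(D) ⊆ F^n` be the corresponding
additive conjucyclic code.  Then the alternating dual `C^{⊥_a}` equals the `K`-linear span
of the `k` vectors `Ψ⁻¹(τ(σ^i(V_{h*})))`, `0 ≤ i ≤ k − 1`. -/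
theorem stmt15 (q n k : ℕ) (hn : 0 < n) {K F : Type*} [Field K] [Fintype K] [Field F]
    [Fintype F] [Algebra K F]
    (hK : Fintype.card K = q) (hF : Fintype.card F = q ^ 2)
    (β : F) (hβ : ∀ x : F, x ≠ 0 → ∃ j : ℕ, x = β ^ j)
    (Tr : F → K) (hTr : ∀ x : F, algebraMap K F (Tr x) = x + x ^ q)
    (g : K[X]) (hg : g.Monic) (hdvd : g ∣ X ^ (2 * n) - 1)
    (hdeg : g.natDegree = k) (hk : k ≤ 2 * n - 1) :
    {v : Fin n → F | ∀ u ∈ Psi q n Tr β ⁻¹' cyclicCodeOf (2 * n) g,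
        altInner q n β u v = 0} =
      (Submodule.span K (Set.range fun i : Fin k =>
          Function.invFun (Psi q n Tr β)
            (tau n ((cycShift (2 * n))^[(i : ℕ)]
              (coeffVec (2 * n) (((X : K[X]) ^ (2 * n) - 1) / g).reverse)))) :
        Set (Fin n → F)) :=
  stmt15_general q n k hn hK hF β hβ Tr hTr g hdvd hdeg
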